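/- Let X_1, X_2, F_1,...,F_r be finite random variables such that for every i in [1:r] the Markov chain F_i - F_{[1:i-1]} X_{(i)_2} - X_{(i+1)_2} holds (i.e., F_i - F_{[1:i-1]}X_1 - X_2 for odd i and F_i - F_{[1:i-1]}X_2 - X_1 for even i). Then Sum_{i=1}^r I(F_i; X_{(i+1)_2} | F_{[1:i-1]}) = I(X_1;X_2) - I(X_1;X_2 | F_{[1:r]}). -/

import Mathlib

open scoped BigOperators

namespace InfoTheory

variable {Ω : Type*} [Fintype Ω]

/-- `p` is a probability mass function on the finite type `Ω`. -/
def IsPMF (p : Ω → ℝ) : Prop := (∀ ω, 0 ≤ p ω) ∧ ∑ ω, p ω = 1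

/-- Distribution of the random variable `A` under `p`. -/
noncomputable def rvDist {α : Type*} [Fintype α] [DecidableEq α]
    (p : Ω → ℝ) (A : Ω → α) (a : α) : ℝ :=
  ∑ ω, if A ω = a then p ω else 0

/-- Shannon entropy (base 2) of the random variable `A` under `p`. -/
noncomputable def entH {α : Type*} [Fintype α] [DecidableEq α]
    (p : Ω → ℝ) (A : Ω → α) : ℝ :=
  -∑ a, rvDist p A a * Real.logb 2 (rvDist p A a)

/-- Conditional entropy `H(A|B)`. -/
noncomputable def condH {α β : Type*} [Fintype α] [DecidableEq α] [Fintype β] [DecidableEq β]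
    (p : Ω → ℝ) (A : Ω → α) (B : Ω → β) : ℝ :=
  entH p (fun ω => (A ω, B ω)) - entH p B

/-- Mutual information `I(A;B)`. -/
noncomputable def mi {α β : Type*} [Fintype α] [DecidableEq α] [Fintype β] [DecidableEq β]
    (p : Ω → ℝ) (A : Ω → α) (B : Ω → β) : ℝ :=
  entH p A + entH p B - entH p (fun ω => (A ω, B ω))

/-- Conditional mutual information `I(A;B|C)`. -/
noncomputable def cmi {α β γ : Type*} [Fintype α] [DecidableEq α] [Fintype β] [DecidableEq β]
    [Fintype γ] [DecidableEq γ]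
    (p : Ω → ℝ) (A : Ω → α) (B : Ω → β) (C : Ω → γ) : ℝ :=
  condH p A C + condH p B C - condH p (fun ω => (A ω, B ω)) C

/-- Markov chain `A - B - C`: `A` and `C` are conditionally independent given `B`. -/
def Markov {α β γ : Type*} [Fintype α] [DecidableEq α] [Fintype β] [DecidableEq β]
    [Fintype γ] [DecidableEq γ]
    (p : Ω → ℝ) (A : Ω → α) (B : Ω → β) (C : Ω → γ) : Prop :=
  ∀ a b c, rvDist p (fun ω => ((A ω, B ω), C ω)) ((a, b), c) * rvDist p B b
    = rvDist p (fun ω => (A ω, B ω)) (a, b) * rvDist p (fun ω => (B ω, C ω)) (b, c)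

/-- Total variation distance between two pmfs on the finite type `α`. -/
noncomputable def TV {α : Type*} [Fintype α] (p q : α → ℝ) : ℝ :=
  (∑ a, |p a - q a|) / 2

/-- The prefix `F_{[1:k]}` of a finite family of random variables, encoded by replacing
the coordinates beyond `k` by `none`. -/
def Fpre {r : ℕ} {𝓕 : Fin r → Type*} (F : ∀ i : Fin r, Ω → 𝓕 i) (k : ℕ) :
    Ω → ∀ j : Fin r, Option (𝓕 j) :=
  fun ω j => if (j : ℕ) < k then some (F j ω) else none

/-- The full tuple `F_{[1:r]}`. -/
def Ffull {r : ℕ} {𝓕 : Fin r → Type*} (F : ∀ i : Fin r, Ω → 𝓕 i) :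
    Ω → ∀ j : Fin r, 𝓕 j :=
  fun ω j => F j ω

end InfoTheory

open InfoTheory

/-! If `F - (G, A) - B`, then `I(F; B | G, A) = 0`, and expanding `I(A, F; B | G)` by the chain
rule in both orders gives `I(F; B | G) = I(A; B | G) - I(A; B | G, F)`. Applied in round `i` with
`G = F_{[1:i-1]}` and `A` the source of the speaking party, the `i`-th summand becomes
`I(X₁; X₂ | F_{[1:i-1]}) - I(X₁; X₂ | F_{[1:i]})`, and the sum telescopes.

Writing `H(A) = -∑ ω, p ω log₂ P(A = A ω)` shows that entropies only depend on the partition of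
`Ω` a variable induces; this absorbs all reshuffling of tuples, including the `Option`-padded
encoding `Fpre` of prefixes. -/

namespace InfoTheory

open Finset

section Entropy

variable {Ω α β γ : Type*} [Fintype Ω] [Fintype α] [DecidableEq α] [Fintype β]
  [DecidableEq β] [Fintype γ] [DecidableEq γ] {p : Ω → ℝ}

theorem rvDist_eq_of_iff {A : Ω → α} {B : Ω → β} {a : α} {b : β}
    (h : ∀ ω, A ω = a ↔ B ω = b) : rvDist p A a = rvDist p B b :=
  sum_congr rfl fun ω _ => if_congr (h ω) rfl rfl

theorem le_rvDist_self (hp0 : ∀ ω, 0 ≤ p ω) (A : Ω → α) (ω : Ω) :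
    p ω ≤ rvDist p A (A ω) :=
  calc p ω = if A ω = A ω then p ω else 0 := (if_pos rfl).symm
    _ ≤ rvDist p A (A ω) :=
      single_le_sum (f := fun ω' => if A ω' = A ω then p ω' else 0)
        (fun ω' _ => by split_ifs <;> simp [hp0 ω']) (mem_univ ω)

theorem rvDist_self_pos (hp0 : ∀ ω, 0 ≤ p ω) {ω : Ω} (hω : 0 < p ω) (A : Ω → α) :
    0 < rvDist p A (A ω) :=
  hω.trans_le (le_rvDist_self hp0 A ω)

theorem entH_eq_neg_sum_mul_logb (p : Ω → ℝ) (A : Ω → α) :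
    entH p A = -∑ ω, p ω * Real.logb 2 (rvDist p A (A ω)) := by
  simp only [entH, rvDist, sum_mul, ite_mul, zero_mul]
  rw [sum_comm]
  simp [sum_ite_eq]

theorem entH_congr_of_iff (p : Ω → ℝ) {A : Ω → α} {B : Ω → β}
    (h : ∀ ω ω', A ω' = A ω ↔ B ω' = B ω) : entH p A = entH p B := by
  simp only [entH_eq_neg_sum_mul_logb, rvDist_eq_of_iff (h _)]

theorem entH_const (hp : ∑ ω, p ω = 1) (c : α) : entH p (fun _ => c) = 0 := by
  simp [entH_eq_neg_sum_mul_logb, rvDist, hp]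

theorem entH_prod_const (p : Ω → ℝ) (A : Ω → α) (c : β) :
    entH p (fun ω => (A ω, c)) = entH p A :=
  entH_congr_of_iff p fun _ _ => by simp

/-- For a Markov chain `A - B - C`, pointwise `P(a,b,c) P(b) = P(a,b) P(b,c)`; on the support
all four factors are positive, so the identity survives taking `log₂` and expectations. -/
theorem entH_add_entH_of_markov (hp0 : ∀ ω, 0 ≤ p ω) {A : Ω → α} {B : Ω → β} {C : Ω → γ}
    (h : Markov p A B C) :
    entH p (fun ω => ((A ω, B ω), C ω)) + entH p B
      = entH p (fun ω => (A ω, B ω)) + entH p (fun ω => (B ω, C ω)) := by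
  simp only [entH_eq_neg_sum_mul_logb, ← neg_add, ← sum_add_distrib, ← mul_add]
  congr 1
  refine sum_congr rfl fun ω _ => ?_
  rcases (hp0 ω).eq_or_lt with hω | hω
  · simp [← hω]
  rw [← Real.logb_mul (rvDist_self_pos hp0 hω (fun ω => ((A ω, B ω), C ω))).ne'
      (rvDist_self_pos hp0 hω B).ne',
    ← Real.logb_mul (rvDist_self_pos hp0 hω (fun ω => (A ω, B ω))).ne'
      (rvDist_self_pos hp0 hω (fun ω => (B ω, C ω))).ne', h]

end Entropy

section ConditionalMutualInformation

variable {Ω α β γ δ : Type*} [Fintype Ω] [Fintype α] [DecidableEq α] [Fintype β]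
  [DecidableEq β] [Fintype γ] [DecidableEq γ] [Fintype δ] [DecidableEq δ] {p : Ω → ℝ}

theorem cmi_comm (p : Ω → ℝ) (A : Ω → α) (B : Ω → β) (C : Ω → γ) :
    cmi p A B C = cmi p B A C := by
  have e : entH p (fun ω => ((A ω, B ω), C ω)) = entH p (fun ω => ((B ω, A ω), C ω)) :=
    entH_congr_of_iff p fun _ _ => by simp only [Prod.mk.injEq]; tauto
  simp only [cmi, condH, e]
  ring

theorem cmi_congr_left {A : Ω → α} {A' : Ω → δ} (B : Ω → β) (C : Ω → γ)
    (h : ∀ ω ω', A ω' = A ω ↔ A' ω' = A' ω) : cmi p A B C = cmi p A' B C := by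
  simp only [cmi, condH,
    entH_congr_of_iff p (A := fun ω => (A ω, C ω)) (B := fun ω => (A' ω, C ω))
      fun _ _ => by simp only [Prod.mk.injEq, h],
    entH_congr_of_iff p (A := fun ω => ((A ω, B ω), C ω)) (B := fun ω => ((A' ω, B ω), C ω))
      fun _ _ => by simp only [Prod.mk.injEq, h]]

theorem cmi_congr_right (A : Ω → α) (B : Ω → β) {C : Ω → γ} {C' : Ω → δ}
    (h : ∀ ω ω', C ω' = C ω ↔ C' ω' = C' ω) : cmi p A B C = cmi p A B C' := by
  simp only [cmi, condH, entH_congr_of_iff p h,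
    entH_congr_of_iff p (A := fun ω => (A ω, C ω)) (B := fun ω => (A ω, C' ω))
      fun _ _ => by simp only [Prod.mk.injEq, h],
    entH_congr_of_iff p (A := fun ω => (B ω, C ω)) (B := fun ω => (B ω, C' ω))
      fun _ _ => by simp only [Prod.mk.injEq, h],
    entH_congr_of_iff p (A := fun ω => ((A ω, B ω), C ω)) (B := fun ω => ((A ω, B ω), C' ω))
      fun _ _ => by simp only [Prod.mk.injEq, h]]

theorem cmi_const_right (hp : ∑ ω, p ω = 1) (A : Ω → α) (B : Ω → β) (c : γ) :
    cmi p A B (fun _ => c) = mi p A B := by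
  simp only [cmi, condH, mi, entH_prod_const, entH_const hp]
  ring

theorem cmi_eq_zero_of_markov (hp0 : ∀ ω, 0 ≤ p ω) {A : Ω → α} {B : Ω → β} {C : Ω → γ}
    (h : Markov p A B C) : cmi p A C B = 0 := by
  have e₁ : entH p (fun ω => (C ω, B ω)) = entH p (fun ω => (B ω, C ω)) :=
    entH_congr_of_iff p fun _ _ => by simp only [Prod.mk.injEq]; tauto
  have e₂ : entH p (fun ω => ((A ω, C ω), B ω)) = entH p (fun ω => ((A ω, B ω), C ω)) :=
    entH_congr_of_iff p fun _ _ => by simp only [Prod.mk.injEq]; tauto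
  simp only [cmi, condH, e₁, e₂]
  linarith [entH_add_entH_of_markov hp0 h]

theorem cmi_prod_left (p : Ω → ℝ) (X : Ω → α) (Y : Ω → δ) (B : Ω → β) (G : Ω → γ) :
    cmi p (fun ω => (X ω, Y ω)) B G = cmi p X B G + cmi p Y B (fun ω => (G ω, X ω)) := by
  have e₁ : entH p (fun ω => (Y ω, (G ω, X ω))) = entH p (fun ω => ((X ω, Y ω), G ω)) :=
    entH_congr_of_iff p fun _ _ => by simp only [Prod.mk.injEq]; tauto
  have e₂ : entH p (fun ω => (B ω, (G ω, X ω))) = entH p (fun ω => ((X ω, B ω), G ω)) :=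
    entH_congr_of_iff p fun _ _ => by simp only [Prod.mk.injEq]; tauto
  have e₃ : entH p (fun ω => ((Y ω, B ω), (G ω, X ω)))
      = entH p (fun ω => (((X ω, Y ω), B ω), G ω)) :=
    entH_congr_of_iff p fun _ _ => by simp only [Prod.mk.injEq]; tauto
  have e₄ : entH p (fun ω => (G ω, X ω)) = entH p (fun ω => (X ω, G ω)) :=
    entH_congr_of_iff p fun _ _ => by simp only [Prod.mk.injEq]; tauto
  simp only [cmi, condH, e₁, e₂, e₃, e₄]
  ring

theorem cmi_eq_cmi_sub_cmi_of_markov (hp0 : ∀ ω, 0 ≤ p ω) {A : Ω → α} {B : Ω → β}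
    {F : Ω → δ} {G : Ω → γ} (h : Markov p F (fun ω => (G ω, A ω)) B) :
    cmi p F B G = cmi p A B G - cmi p A B (fun ω => (G ω, F ω)) := by
  have hswap : cmi p (fun ω => (A ω, F ω)) B G = cmi p (fun ω => (F ω, A ω)) B G :=
    cmi_congr_left B G fun _ _ => by simp only [Prod.mk.injEq]; tauto
  rw [cmi_prod_left, cmi_prod_left, cmi_eq_zero_of_markov hp0 h] at hswap
  linarith

end ConditionalMutualInformation

section Prefix

variable {Ω : Type*} {r : ℕ} {𝓕 : Fin r → Type*} (F : ∀ i : Fin r, Ω → 𝓕 i)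

theorem Fpre_zero : Fpre F 0 = fun _ _ => none := by
  funext ω j
  simp [Fpre]

theorem Fpre_eq_Fpre_iff (k : ℕ) (ω ω' : Ω) :
    Fpre F k ω' = Fpre F k ω ↔ ∀ j : Fin r, (j : ℕ) < k → F j ω' = F j ω := by
  simp only [Fpre, funext_iff]
  refine forall_congr' fun j => ?_
  split_ifs with hj <;> simp [hj]

theorem Fpre_succ_eq_Fpre_succ_iff (i : Fin r) (ω ω' : Ω) :
    Fpre F (i + 1) ω' = Fpre F (i + 1) ω ↔ (Fpre F i ω', F i ω') = (Fpre F i ω, F i ω) := by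
  simp only [Prod.mk.injEq, Fpre_eq_Fpre_iff]
  constructor
  · intro h
    exact ⟨fun j hj => h j (Nat.lt_succ_of_lt hj), h i (Nat.lt_succ_self i)⟩
  · rintro ⟨hlt, hi⟩ j hj
    rcases Nat.lt_succ_iff_lt_or_eq.mp hj with hj | hj
    · exact hlt j hj
    · obtain rfl := Fin.ext hj
      exact hi

end Prefix

end InfoTheory

/-- Round `i + 1` of the paper is indexed by `i : Fin r`, so its odd rounds are those with
`Even (i : ℕ)`. -/
theorem sum_cmi_eq_mi_sub_cmi
    {Ω 𝒳₁ 𝒳₂ : Type*} [Fintype Ω] [Fintype 𝒳₁] [DecidableEq 𝒳₁]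
    [Fintype 𝒳₂] [DecidableEq 𝒳₂] {r : ℕ} {𝓕 : Fin r → Type*}
    [∀ i, Fintype (𝓕 i)] [∀ i, DecidableEq (𝓕 i)]
    (p : Ω → ℝ) (hp : IsPMF p)
    (X1 : Ω → 𝒳₁) (X2 : Ω → 𝒳₂) (F : ∀ i : Fin r, Ω → 𝓕 i)
    (hMarkov : ∀ i : Fin r,
      (Even (i : ℕ) →
        Markov p (F i) (fun ω => (Fpre F (i : ℕ) ω, X1 ω)) X2) ∧
      (¬ Even (i : ℕ) →
        Markov p (F i) (fun ω => (Fpre F (i : ℕ) ω, X2 ω)) X1)) :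
    ∑ i : Fin r,
        (if Even (i : ℕ) then cmi p (F i) X2 (Fpre F (i : ℕ))
         else cmi p (F i) X1 (Fpre F (i : ℕ)))
      = mi p X1 X2 - cmi p X1 X2 (Fpre F r) := by
  have step (i : Fin r) :
      (if Even (i : ℕ) then cmi p (F i) X2 (Fpre F i) else cmi p (F i) X1 (Fpre F i))
        = cmi p X1 X2 (Fpre F i) - cmi p X1 X2 (Fpre F (i + 1)) := by
    rw [cmi_congr_right X1 X2 (Fpre_succ_eq_Fpre_succ_iff F i)]
    split_ifs with hi
    · exact cmi_eq_cmi_sub_cmi_of_markov hp.1 ((hMarkov i).1 hi)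
    · rw [cmi_comm p X1, cmi_comm p X1]
      exact cmi_eq_cmi_sub_cmi_of_markov hp.1 ((hMarkov i).2 hi)
  rw [Finset.sum_congr rfl fun i _ => step i,
    Fin.sum_univ_eq_sum_range (fun k => cmi p X1 X2 (Fpre F k) - cmi p X1 X2 (Fpre F (k + 1))),
    Finset.sum_range_sub', Fpre_zero, cmi_const_right hp.2]
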